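/- Let φ be a repulsive, tempered potential on ℝ^d with C_φ > 0, and fix λ_0 ∈ [0, e/C_φ). Then there exist ε_1, ε_2 > 0 and ε_3 ∈ (0, ε_2) such that for every λ ∈ 𝒩(λ_0, ε_1) and every measurable function 𝐳 : ℝ^d → ℂ with 𝐳(w) ∈ 𝒩̄(log(1+e), ε_2) for all w ∈ ℝ^d, the number Γ := 1 + C_φ λ e · exp( −(1/C_φ) ∫_{ℝ^d} e^{𝐳(w)} (1 − e^{−φ(w)}) dw ) satisfies Γ ≠ 0 and Log(Γ) ∈ 𝒩(log(1+e), ε_3), where Log is the principal branch of the complex logarithm. (Lemma 3.7: contraction of g_λ(𝐳) = ψ(F(λ, ψ^{−1}(𝐳))) with ψ(x) = log(1 + C_φ x) for non-constant 𝐳.) -/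

import Mathlib

/-!
Put `ρ = 1 - e^{-φ}`, so `ρ ≥ 0` and `∫ ρ = C_φ`. Clamping `Re 𝐳` to `[0, log (1 + e)]` gives a
real `τ` within `ε₂` of `𝐳`, and the real average `x = C_φ⁻¹ ∫ e^τ ρ ∈ [1, 1 + e]` approximates
`C_φ⁻¹ ∫ e^𝐳 ρ` up to relative error `ε₂ + ε₂²`. For real `λ = t ∈ [0, λ₀]` and this real average,
`Γ = 1 + u` with `u = C_φ t e^{1-x} < e`, so `log Γ ∈ [0, log (1 + e)]`. The perturbation moves
`log Γ` by at most about `x u / (1 + u) · ε₂`, and `x u / (1 + u) ≤ c := K (e + 1) / (e (1 + K))`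
with `K = C_φ λ₀ < e`, so `c < 1` and `ε₃ = (1 + c) / 2 · ε₂` works once `ε₁, ε₂` are small.
-/

open MeasureTheory Filter

noncomputable section

/-- Euclidean space ℝ^d. -/
abbrev Euc (d : ℕ) := EuclideanSpace ℝ (Fin d)

/-- `e^{-t}` for `t ∈ [0,∞]`, with the convention `e^{-∞} = 0`. -/
def expNeg (t : ENNReal) : ℝ := if t = ⊤ then 0 else Real.exp (-t.toReal)

/-- The open neighborhood `𝒩(s,ε) = {z ∈ ℂ : dist(z,[0,s]) < ε}`. -/
def NN (s ε : ℝ) : Set ℂ := {z | ∃ t ∈ Set.Icc (0 : ℝ) s, ‖z - t‖ < ε}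

/-- The closed neighborhood `𝒩̄(s,ε) = {z ∈ ℂ : dist(z,[0,s]) ≤ ε}`. -/
def NNbar (s ε : ℝ) : Set ℂ := {z | ∃ t ∈ Set.Icc (0 : ℝ) s, ‖z - t‖ ≤ ε}

open Set

lemma expNeg_le_one (t : ENNReal) : expNeg t ≤ 1 := by
  unfold expNeg
  split_ifs
  · exact zero_le_one
  · exact Real.exp_le_one_iff.2 (neg_nonpos.2 ENNReal.toReal_nonneg)

lemma abs_sub_projIcc_le {a b x s : ℝ} (hab : a ≤ b) (hs : s ∈ Icc a b) :
    |x - projIcc a b hab x| ≤ |x - s| := by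
  rw [coe_projIcc]
  obtain ⟨hs₁, hs₂⟩ := hs
  rcases le_total x a with h | h
  · rw [min_eq_right (h.trans hab), max_eq_left h, abs_of_nonpos, abs_of_nonpos] <;> linarith
  rcases le_total x b with h' | h'
  · rw [min_eq_right h', max_eq_right h, sub_self, abs_zero]
    exact abs_nonneg _
  · rw [min_eq_left h', max_eq_right hab, abs_of_nonneg, abs_of_nonneg] <;> linarith

lemma norm_sub_projIcc_re_le {a b s : ℝ} (hab : a ≤ b) (hs : s ∈ Icc a b) (z : ℂ) :
    ‖z - projIcc a b hab z.re‖ ≤ ‖z - s‖ := by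
  simp only [Complex.norm_eq_sqrt_sq_add_sq, Complex.sub_re, Complex.sub_im, Complex.ofReal_re,
    Complex.ofReal_im, sub_zero]
  apply Real.sqrt_le_sqrt
  linarith [sq_le_sq.2 (abs_sub_projIcc_le (x := z.re) hab hs)]

lemma norm_exp_sub_one_le_of_norm_le {δ : ℂ} {ε : ℝ} (hδ : ‖δ‖ ≤ ε) (hε : ε ≤ 1) :
    ‖Complex.exp δ - 1‖ ≤ ε + ε ^ 2 := by
  have h := Complex.norm_exp_sub_one_sub_id_le (hδ.trans hε)
  have hsq : ‖δ‖ ^ 2 ≤ ε ^ 2 := pow_le_pow_left₀ (norm_nonneg δ) hδ 2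
  linarith [norm_le_norm_add_norm_sub' (Complex.exp δ - 1) δ]

section Average

variable {α : Type*} [MeasurableSpace α] {μ : Measure α} {ρ : α → ℝ} {z : α → ℂ}

lemma norm_integral_cexp_mul_sub_le {τ : α → ℝ} {ε : ℝ} (hz : Measurable z)
    (hρ : AEStronglyMeasurable ρ μ) (hρ0 : ∀ w, 0 ≤ ρ w)
    (hg : Integrable (fun w => Real.exp (τ w) * ρ w) μ) (hε : ε ≤ 1)
    (hzτ : ∀ w, ‖z w - τ w‖ ≤ ε) :
    ‖∫ w, Complex.exp (z w) * ρ w ∂μ - ((∫ w, Real.exp (τ w) * ρ w ∂μ : ℝ) : ℂ)‖ ≤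
      (ε + ε ^ 2) * ∫ w, Real.exp (τ w) * ρ w ∂μ := by
  have hpt : ∀ w, ‖Complex.exp (z w) * ρ w - ((Real.exp (τ w) * ρ w : ℝ) : ℂ)‖ ≤
      (ε + ε ^ 2) * (Real.exp (τ w) * ρ w) := fun w => by
    have hfac : Complex.exp (z w) * ρ w - ((Real.exp (τ w) * ρ w : ℝ) : ℂ) =
        ((Real.exp (τ w) * ρ w : ℝ) : ℂ) * (Complex.exp (z w - τ w) - 1) := by
      push_cast
      rw [Complex.exp_sub]
      field_simp
    rw [hfac, norm_mul, Complex.norm_real, Real.norm_of_nonneg (by have := hρ0 w; positivity),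
      mul_comm]
    exact mul_le_mul_of_nonneg_right (norm_exp_sub_one_le_of_norm_le (hzτ w) hε)
      (by have := hρ0 w; positivity)
  have hgC : Integrable (fun w => ((Real.exp (τ w) * ρ w : ℝ) : ℂ)) μ := hg.ofReal
  have hfm : AEStronglyMeasurable (fun w => Complex.exp (z w) * ρ w) μ :=
    (Complex.measurable_exp.comp hz).aestronglyMeasurable.mul
      (Complex.continuous_ofReal.comp_aestronglyMeasurable hρ)
  have hdiff : Integrable (fun w => Complex.exp (z w) * ρ w - ((Real.exp (τ w) * ρ w : ℝ) : ℂ)) μ :=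
    (hg.const_mul _).mono' (hfm.sub hgC.1) (ae_of_all _ hpt)
  have hf : Integrable (fun w => Complex.exp (z w) * ρ w) μ :=
    (hdiff.add hgC).congr (ae_of_all _ fun w => sub_add_cancel _ _)
  calc _ = ‖∫ w, (Complex.exp (z w) * ρ w - ((Real.exp (τ w) * ρ w : ℝ) : ℂ)) ∂μ‖ := by
        rw [integral_sub hf hgC, integral_complex_ofReal]
    _ ≤ ∫ w, (ε + ε ^ 2) * (Real.exp (τ w) * ρ w) ∂μ :=
        norm_integral_le_of_norm_le (hg.const_mul _) (ae_of_all _ hpt)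
    _ = _ := integral_const_mul _ _

lemma exists_norm_average_cexp_sub_le (hρ0 : ∀ w, 0 ≤ ρ w)
    (hρ : Integrable ρ μ) (hC : 0 < ∫ w, ρ w ∂μ) (hz : Measurable z) {L ε : ℝ} (hL : 0 ≤ L)
    (hε : ε ≤ 1) (hzL : ∀ w, z w ∈ NNbar L ε) :
    ∃ x ∈ Icc 1 (Real.exp L), ‖((∫ w, ρ w ∂μ : ℝ) : ℂ)⁻¹ * ∫ w, Complex.exp (z w) * ρ w ∂μ - x‖ ≤
      (ε + ε ^ 2) * x := by
  set τ : α → ℝ := fun w => projIcc 0 L hL (z w).re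
  have hτ : ∀ w, τ w ∈ Icc 0 L := fun w => (projIcc 0 L hL (z w).re).2
  have hzτ : ∀ w, ‖z w - τ w‖ ≤ ε := fun w => by
    obtain ⟨s, hs, hzs⟩ := hzL w
    exact (norm_sub_projIcc_re_le hL hs (z w)).trans hzs
  have hτm : Measurable τ :=
    (continuous_subtype_val.comp continuous_projIcc).measurable.comp (Complex.measurable_re.comp hz)
  have hg : Integrable (fun w => Real.exp (τ w) * ρ w) μ :=
    (hρ.const_mul (Real.exp L)).mono' (by fun_prop) (ae_of_all _ fun w => by
      rw [Real.norm_of_nonneg (by have := hρ0 w; positivity)]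
      exact mul_le_mul_of_nonneg_right (Real.exp_le_exp.2 (hτ w).2) (hρ0 w))
  set C := ∫ w, ρ w ∂μ
  set X := ∫ w, Real.exp (τ w) * ρ w ∂μ
  have hCX : C ≤ X :=
    integral_mono hρ hg fun w => le_mul_of_one_le_left (hρ0 w) (Real.one_le_exp (hτ w).1)
  have hXC : X ≤ Real.exp L * C := by
    rw [← integral_const_mul]
    exact integral_mono hg (hρ.const_mul _) fun w =>
      mul_le_mul_of_nonneg_right (Real.exp_le_exp.2 (hτ w).2) (hρ0 w)
  refine ⟨X / C, ⟨(one_le_div hC).2 hCX, (div_le_iff₀ hC).2 hXC⟩, ?_⟩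
  calc _ = ‖(C : ℂ)⁻¹ * (∫ w, Complex.exp (z w) * ρ w ∂μ - X)‖ := by
        push_cast
        ring_nf
    _ = C⁻¹ * ‖∫ w, Complex.exp (z w) * ρ w ∂μ - X‖ := by
        rw [norm_mul, norm_inv, Complex.norm_real, Real.norm_of_nonneg hC.le]
    _ ≤ C⁻¹ * ((ε + ε ^ 2) * X) := by
        gcongr
        exact norm_integral_cexp_mul_sub_le hz hρ.1 hρ0 hg hε hzτ
    _ = (ε + ε ^ 2) * (X / C) := by ring

end Average

lemma norm_one_add_mul_cexp_neg_sub_le {k t x β ε : ℝ} {lam m : ℂ} (hk : 0 ≤ k) (ht : 0 ≤ t)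
    (hlam : ‖lam - t‖ ≤ ε) (hm : ‖m - x‖ ≤ β) (hβx : β ≤ x) (hβ : β ≤ 1) :
    ‖1 + k * lam * Complex.exp (-m) - ((1 + k * t * Real.exp (-x) : ℝ) : ℂ)‖ ≤
      k * ε + k * t * Real.exp (-x) * (β + β ^ 2) := by
  have hexp : ‖Complex.exp (-m)‖ ≤ 1 := by
    have hre : |m.re - x| ≤ β := by simpa using (Complex.abs_re_le_norm (m - x)).trans hm
    rw [Complex.norm_exp, Real.exp_le_one_iff, Complex.neg_re, neg_nonpos]
    linarith [(abs_le.1 hre).1]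
  have hdiff : ‖Complex.exp (-m) - Real.exp (-x)‖ ≤ Real.exp (-x) * (β + β ^ 2) := by
    have hfac : Complex.exp (-m) - Real.exp (-x) = Real.exp (-x) * (Complex.exp (x - m) - 1) := by
      push_cast
      rw [mul_sub, ← Complex.exp_add]
      ring_nf
    rw [hfac, norm_mul, Complex.norm_real, Real.norm_of_nonneg (Real.exp_pos _).le]
    gcongr
    exact norm_exp_sub_one_le_of_norm_le (by rwa [norm_sub_rev]) hβ
  calc _ = ‖k * ((lam - t) * Complex.exp (-m) + t * (Complex.exp (-m) - Real.exp (-x)))‖ := by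
        push_cast
        ring_nf
    _ ≤ k * (‖lam - t‖ * ‖Complex.exp (-m)‖ + t * ‖Complex.exp (-m) - Real.exp (-x)‖) := by
        rw [norm_mul, Complex.norm_real, Real.norm_of_nonneg hk]
        gcongr
        refine (norm_add_le _ _).trans_eq ?_
        rw [norm_mul, norm_mul, Complex.norm_real, Real.norm_of_nonneg ht]
    _ ≤ k * (ε * 1 + t * (Real.exp (-x) * (β + β ^ 2))) := by
        have := (norm_nonneg _).trans hlam
        gcongr
    _ = _ := by ring

lemma norm_log_sub_log_le {Γ : ℂ} {p r : ℝ} (hp : 0 < p) (hr : r ≤ 1 / 2)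
    (hΓ : ‖Γ - p‖ ≤ p * r) : Γ ≠ 0 ∧ ‖Complex.log Γ - Real.log p‖ ≤ r + r ^ 2 := by
  have hp' : (p : ℂ) ≠ 0 := Complex.ofReal_ne_zero.2 hp.ne'
  set w := Γ / p - 1
  have hΓw : Γ = p * (1 + w) := by
    simp only [w]
    field_simp
    ring
  have hw : ‖w‖ ≤ r := by
    have : w = (Γ - p) / p := by simp only [w]; field_simp
    rw [this, norm_div, Complex.norm_real, Real.norm_of_nonneg hp.le, div_le_iff₀ hp]
    linarith
  have hw1 : 1 + w ≠ 0 := fun h => by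
    have : ‖w‖ = 1 := by rw [eq_neg_of_add_eq_zero_right h, norm_neg, norm_one]
    linarith
  refine ⟨hΓw ▸ mul_ne_zero hp' hw1, ?_⟩
  rw [hΓw, Complex.log_ofReal_mul hp hw1, add_sub_cancel_left]
  have hw0 := norm_nonneg w
  have hinv : (1 - ‖w‖)⁻¹ ≤ 2 := by
    rw [inv_le_comm₀ (by linarith) two_pos]
    linarith
  calc ‖Complex.log (1 + w)‖ ≤ ‖w‖ ^ 2 * (1 - ‖w‖)⁻¹ / 2 + ‖w‖ :=
        Complex.norm_log_one_add_le (by linarith)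
    _ ≤ ‖w‖ ^ 2 * 2 / 2 + ‖w‖ := by gcongr
    _ ≤ r + r ^ 2 := by nlinarith

/-- `(x - 1) e^{1-x} ≤ e⁻¹` gives `x u ≤ u + K / e`, and `(u + K / e) / (1 + u)` increases with
`u ≤ K` because `K < e`. -/
lemma mul_div_one_add_le_of_le_mul_exp {K x u : ℝ} (hKe : K < Real.exp 1) (hx : 1 ≤ x)
    (hu : 0 ≤ u) (huK : u ≤ K * Real.exp (1 - x)) :
    x * u / (1 + u) ≤ K * (Real.exp 1 + 1) / (Real.exp 1 * (1 + K)) := by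
  have he := Real.exp_pos 1
  have hexp1 : Real.exp (1 - x) ≤ 1 := Real.exp_le_one_iff.2 (by linarith)
  have hK : 0 ≤ K := nonneg_of_mul_nonneg_left (hu.trans huK) (Real.exp_pos _)
  have hu_le : u ≤ K := huK.trans (mul_le_of_le_one_right hK hexp1)
  have hxu : x * u ≤ u + K / Real.exp 1 := by
    have hlin : (x - 1) * Real.exp (1 - x) ≤ (Real.exp 1)⁻¹ := by
      have := Real.add_one_le_exp (x - 2)
      rw [← Real.exp_neg, show -(1 : ℝ) = (x - 2) + (1 - x) by ring, Real.exp_add]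
      exact mul_le_mul_of_nonneg_right (by linarith) (Real.exp_pos _).le
    have := mul_le_mul_of_nonneg_left huK (by linarith : 0 ≤ x - 1)
    rw [div_eq_mul_inv]
    nlinarith
  rw [div_le_div_iff₀ (by linarith) (by positivity)]
  calc x * u * (Real.exp 1 * (1 + K)) ≤ (u + K / Real.exp 1) * (Real.exp 1 * (1 + K)) := by
        gcongr
    _ = u * Real.exp 1 * (1 + K) + K * (1 + K) := by field_simp
    _ ≤ K * (Real.exp 1 + 1) * (1 + u) := by
        nlinarith [mul_nonneg (sub_nonneg.2 hu_le) (sub_nonneg.2 hKe.le)]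

lemma contraction_numerics {c ε x u β : ℝ} (hc0 : 0 ≤ c) (hc1 : c < 1) (hε : ε = (1 - c) / 600)
    (hx : 1 ≤ x) (hu : 0 ≤ u) (hxu : x * u ≤ c * (1 + u)) (hβ_def : β = (ε + ε ^ 2) * x)
    (hβ : β ≤ 8 * ε) :
    ((1 - c) * ε / 8 + u * (β + β ^ 2)) / (1 + u) ≤ 1 / 2 ∧
      ((1 - c) * ε / 8 + u * (β + β ^ 2)) / (1 + u) +
        (((1 - c) * ε / 8 + u * (β + β ^ 2)) / (1 + u)) ^ 2 < (1 + c) / 2 * ε := by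
  have hε0 : 0 < ε := by rw [hε]; linarith
  have hβ0 : 0 ≤ β := hβ_def ▸ mul_nonneg (by positivity) (by linarith)
  set r := ((1 - c) * ε / 8 + u * (β + β ^ 2)) / (1 + u)
  have hr0 : 0 ≤ r := by positivity
  have hr : r ≤ (1 - c) * ε / 8 + c * (ε + ε ^ 2) + β ^ 2 := by
    rw [div_le_iff₀ (by linarith)]
    nlinarith [mul_le_mul_of_nonneg_left hxu (by positivity : (0 : ℝ) ≤ ε + ε ^ 2),
      mul_nonneg hu (sq_nonneg β), mul_nonneg (mul_nonneg (by linarith : 0 ≤ 1 - c) hε0.le) hu]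
  have hεsq : ε ^ 2 = (1 - c) / 600 * ε := by rw [hε]; ring
  have hβsq : β ^ 2 ≤ 64 * ε ^ 2 := by nlinarith
  have hr' : r ≤ c * ε + (1 - c) / 4 * ε := by nlinarith
  have hrε : r ≤ ε := by nlinarith
  refine ⟨by linarith, ?_⟩
  nlinarith [mul_pos (by linarith : (0 : ℝ) < 1 - c) hε0]

def contractionRate (K : ℝ) : ℝ := K * (Real.exp 1 + 1) / (Real.exp 1 * (1 + K))

lemma contractionRate_nonneg {K : ℝ} (hK : 0 ≤ K) : 0 ≤ contractionRate K := by
  unfold contractionRate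
  positivity

lemma contractionRate_lt_one {K : ℝ} (hK : 0 ≤ K) (hKe : K < Real.exp 1) :
    contractionRate K < 1 := by
  rw [contractionRate, div_lt_one (by positivity)]
  linarith

lemma mul_exp_one_mul_mul_exp_neg_le {C t lam0 x : ℝ} (hC : 0 ≤ C) (ht : t ≤ lam0) :
    C * Real.exp 1 * t * Real.exp (-x) ≤ C * lam0 * Real.exp (1 - x) := by
  rw [sub_eq_add_neg, Real.exp_add]
  have : C * t ≤ C * lam0 := mul_le_mul_of_nonneg_left ht hC
  calc C * Real.exp 1 * t * Real.exp (-x) = C * t * (Real.exp 1 * Real.exp (-x)) := by ring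
    _ ≤ _ := by gcongr

theorem log_one_add_mul_cexp_neg_mem_NN {C lam0 t x ε : ℝ} {lam m : ℂ} (hC : 0 < C)
    (hK0 : 0 ≤ C * lam0) (hKe : C * lam0 < Real.exp 1)
    (hε : ε = (1 - contractionRate (C * lam0)) / 600) (ht : t ∈ Icc 0 lam0)
    (hlam : ‖lam - t‖ < (1 - contractionRate (C * lam0)) * ε / (8 * (C * Real.exp 1)))
    (hx : x ∈ Icc 1 (1 + Real.exp 1)) (hm : ‖m - x‖ ≤ (ε + ε ^ 2) * x) :
    1 + C * lam * Real.exp 1 * Complex.exp (-m) ≠ 0 ∧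
      Complex.log (1 + C * lam * Real.exp 1 * Complex.exp (-m)) ∈
        NN (Real.log (1 + Real.exp 1)) ((1 + contractionRate (C * lam0)) / 2 * ε) := by
  set c := contractionRate (C * lam0)
  have hc0 : 0 ≤ c := contractionRate_nonneg hK0
  have hc1 : c < 1 := contractionRate_lt_one hK0 hKe
  have hε0 : 0 < ε := by rw [hε]; linarith
  have hk : 0 < C * Real.exp 1 := by positivity
  set u := C * Real.exp 1 * t * Real.exp (-x)
  set β := (ε + ε ^ 2) * x with hβ_def
  have hu0 : 0 ≤ u := by have := ht.1; positivity
  have huK : u ≤ C * lam0 * Real.exp (1 - x) := mul_exp_one_mul_mul_exp_neg_le hC.le ht.2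
  have hβ : β ≤ 8 * ε := by
    have hx4 : x ≤ 4 := by linarith [hx.2, Real.exp_one_lt_d9]
    have hεsq : ε ^ 2 ≤ ε := by nlinarith
    nlinarith [mul_le_mul_of_nonneg_right hεsq (by linarith [hx.1] : 0 ≤ x)]
  have hxu : x * u ≤ c * (1 + u) :=
    (div_le_iff₀ (by linarith)).1 (mul_div_one_add_le_of_le_mul_exp hKe hx.1 hu0 huK)
  obtain ⟨hr2, hrε⟩ := contraction_numerics hc0 hc1 hε hx.1 hu0 hxu hβ_def hβ
  have hΓ := norm_one_add_mul_cexp_neg_sub_le hk.le ht.1 hlam.le hm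
    (by nlinarith [hx.1]) (by linarith)
  rw [show C * Real.exp 1 * ((1 - c) * ε / (8 * (C * Real.exp 1))) = (1 - c) * ε / 8 by
    field_simp] at hΓ
  have hΓeq : 1 + C * lam * Real.exp 1 * Complex.exp (-m) =
      1 + ((C * Real.exp 1 : ℝ) : ℂ) * lam * Complex.exp (-m) := by
    rw [Complex.ofReal_mul]
    ring
  rw [← hΓeq] at hΓ
  obtain ⟨hne, hlog⟩ := norm_log_sub_log_le (p := 1 + u) (by linarith) hr2
    (by rwa [mul_div_cancel₀ _ (by linarith)])
  refine ⟨hne, Real.log (1 + u), ⟨Real.log_nonneg (by linarith), ?_⟩, hlog.trans_lt hrε⟩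
  have : u ≤ C * lam0 :=
    huK.trans (mul_le_of_le_one_right hK0 (Real.exp_le_one_iff.2 (by linarith [hx.1])))
  exact Real.log_le_log (by linarith) (by linarith)

theorem contraction_nonconstant_general
    (d : ℕ)
    (φ : Euc d → ENNReal)
    (hφtemp : Integrable (fun x : Euc d => 1 - expNeg (φ x)))
    (Cφ : ℝ) (hC : Cφ = ∫ x : Euc d, (1 - expNeg (φ x)))
    (hCpos : 0 < Cφ)
    (lam0 : ℝ) (hlam0 : lam0 ∈ Set.Ico 0 (Real.exp 1 / Cφ)) :
    ∃ ε1 > 0, ∃ ε2 > 0, ∃ ε3 : ℝ, 0 < ε3 ∧ ε3 < ε2 ∧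
      ∀ lam ∈ NN lam0 ε1,
        ∀ z : Euc d → ℂ, Measurable z →
          (∀ w : Euc d, z w ∈ NNbar (Real.log (1 + Real.exp 1)) ε2) →
          (1 + (Cφ : ℂ) * lam * (Real.exp 1 : ℂ) *
              Complex.exp (-(((Cφ : ℂ))⁻¹ *
                ∫ w : Euc d, Complex.exp (z w) * ((1 - expNeg (φ w) : ℝ) : ℂ))) ≠ 0) ∧
          Complex.log (1 + (Cφ : ℂ) * lam * (Real.exp 1 : ℂ) *
              Complex.exp (-(((Cφ : ℂ))⁻¹ *
                ∫ w : Euc d, Complex.exp (z w) * ((1 - expNeg (φ w) : ℝ) : ℂ)))) ∈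
            NN (Real.log (1 + Real.exp 1)) ε3 := by
  have hK0 : 0 ≤ Cφ * lam0 := mul_nonneg hCpos.le hlam0.1
  have hKe : Cφ * lam0 < Real.exp 1 := (lt_div_iff₀' hCpos).1 hlam0.2
  have hc0 := contractionRate_nonneg hK0
  have hc1 := contractionRate_lt_one hK0 hKe
  set c := contractionRate (Cφ * lam0)
  set ε := (1 - c) / 600 with hε
  have h1c : 0 < 1 - c := by linarith
  have hε0 : 0 < ε := by positivity
  refine ⟨(1 - c) * ε / (8 * (Cφ * Real.exp 1)), by positivity, ε, hε0, (1 + c) / 2 * ε,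
    by positivity, by nlinarith, ?_⟩
  rintro lam ⟨t, ht, hlamt⟩ z hz hzL
  obtain ⟨x, hx, hm⟩ := exists_norm_average_cexp_sub_le
    (fun w => sub_nonneg.2 (expNeg_le_one (φ w))) hφtemp (hC ▸ hCpos) hz
    (Real.log_nonneg (by linarith [Real.exp_pos 1])) (by linarith) hzL
  rw [← hC] at hm
  rw [Real.exp_log (by positivity)] at hx
  exact log_one_add_mul_cexp_neg_mem_NN hCpos hK0 hKe hε ht hlamt hx hm

/-- Lemma 3.7: contraction of `g_λ(𝐳) = ψ(F(λ,ψ^{−1}(𝐳)))`, `ψ(x) = log(1 + C_φ x)`,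
for non-constant `𝐳`: with
`Γ = 1 + C_φ λ e · exp(−(1/C_φ)∫ e^{𝐳(w)}(1 − e^{−φ(w)}) dw)` one has `Γ ≠ 0`
and `Log Γ ∈ 𝒩(log(1+e), ε₃)`. -/
theorem contraction_nonconstant
    (d : ℕ) (hd : 1 ≤ d)
    (φ : Euc d → ENNReal) (hφmeas : Measurable φ)
    (hφsymm : ∀ x, φ (-x) = φ x)
    (hφtemp : Integrable (fun x : Euc d => 1 - expNeg (φ x)))
    (Cφ : ℝ) (hC : Cφ = ∫ x : Euc d, (1 - expNeg (φ x)))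
    (hCpos : 0 < Cφ)
    (lam0 : ℝ) (hlam0 : lam0 ∈ Set.Ico 0 (Real.exp 1 / Cφ)) :
    ∃ ε1 > 0, ∃ ε2 > 0, ∃ ε3 : ℝ, 0 < ε3 ∧ ε3 < ε2 ∧
      ∀ lam ∈ NN lam0 ε1,
        ∀ z : Euc d → ℂ, Measurable z →
          (∀ w : Euc d, z w ∈ NNbar (Real.log (1 + Real.exp 1)) ε2) →
          (1 + (Cφ : ℂ) * lam * (Real.exp 1 : ℂ) *
              Complex.exp (-(((Cφ : ℂ))⁻¹ *
                ∫ w : Euc d, Complex.exp (z w) * ((1 - expNeg (φ w) : ℝ) : ℂ))) ≠ 0) ∧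
          Complex.log (1 + (Cφ : ℂ) * lam * (Real.exp 1 : ℂ) *
              Complex.exp (-(((Cφ : ℂ))⁻¹ *
                ∫ w : Euc d, Complex.exp (z w) * ((1 - expNeg (φ w) : ℝ) : ℂ)))) ∈
            NN (Real.log (1 + Real.exp 1)) ε3 :=
  contraction_nonconstant_general d φ hφtemp Cφ hC hCpos lam0 hlam0

end
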